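/- Let f : ℝⁿ → ℝⁿ be of class C², let p ∈ ℝⁿ with f(p) = 0, let g_p(h) := f(p+h) − f(p) − Df_p(h), and let c_p > 0 denote the smallest nonzero singular value of Df_p. Suppose x ∈ ℝⁿ satisfies x − p ∈ (ker Df_p)^⊥ and ‖g_p(x−p)‖ / ‖Df_p(x−p)‖ < 1/2. Then (1/2)‖Df_p(x−p)‖ ≤ ‖f(x)‖ and consequently (c_p/2)‖x − p‖ ≤ ‖f(x)‖. -/

import Mathlib

open Set

/-- The smallest nonzero singular value of `A`, i.e. the infimum of `‖A v‖` over unit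
vectors `v` orthogonal to the kernel of `A`. -/
noncomputable def smallestPosSV {n : ℕ}
    (A : EuclideanSpace ℝ (Fin n) →L[ℝ] EuclideanSpace ℝ (Fin n)) : ℝ :=
  sInf {r : ℝ | ∃ v ∈ (LinearMap.ker A.toLinearMap)ᗮ, ‖v‖ = 1 ∧ r = ‖A v‖}

theorem smallestPosSV_mul_norm_le {n : ℕ}
    (A : EuclideanSpace ℝ (Fin n) →L[ℝ] EuclideanSpace ℝ (Fin n))
    {v : EuclideanSpace ℝ (Fin n)} (hv : v ∈ (LinearMap.ker A.toLinearMap)ᗮ) :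
    smallestPosSV A * ‖v‖ ≤ ‖A v‖ := by
  rcases eq_or_ne v 0 with rfl | hv0
  · simp
  have hbdd : BddBelow {r : ℝ | ∃ w ∈ (LinearMap.ker A.toLinearMap)ᗮ, ‖w‖ = 1 ∧ r = ‖A w‖} :=
    ⟨0, fun _ ⟨_, _, _, hr⟩ => hr ▸ norm_nonneg _⟩
  have hle : smallestPosSV A ≤ ‖A (‖v‖⁻¹ • v)‖ :=
    csInf_le hbdd ⟨_, Submodule.smul_mem _ _ hv, norm_smul_inv_norm hv0, rfl⟩
  rw [map_smul, norm_smul, norm_inv, norm_norm, le_inv_mul_iff₀ (norm_pos_iff.mpr hv0)] at hle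
  linarith

theorem one_sub_mul_norm_le_norm_of_norm_sub_div_le {E : Type*} [SeminormedAddCommGroup E]
    {y a : E} {c : ℝ} (h : ‖y - a‖ / ‖a‖ ≤ c) : (1 - c) * ‖a‖ ≤ ‖y‖ := by
  rcases (norm_nonneg a).eq_or_lt with ha | ha
  · simp [← ha]
  rw [div_le_iff₀ ha] at h
  linarith [norm_sub_norm_le a y, norm_sub_rev a y]

theorem statement6_general
    (n : ℕ)
    (f : EuclideanSpace ℝ (Fin n) → EuclideanSpace ℝ (Fin n))
    (p : EuclideanSpace ℝ (Fin n)) (hfp : f p = 0)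
    (cp : ℝ) (hcp : cp = smallestPosSV (fderiv ℝ f p))
    (x : EuclideanSpace ℝ (Fin n))
    (hx : x - p ∈ (LinearMap.ker (fderiv ℝ f p).toLinearMap)ᗮ)
    (hratio : ‖f (p + (x - p)) - f p - fderiv ℝ f p (x - p)‖ / ‖fderiv ℝ f p (x - p)‖ < 1 / 2) :
    (1 / 2) * ‖fderiv ℝ f p (x - p)‖ ≤ ‖f x‖ ∧ (cp / 2) * ‖x - p‖ ≤ ‖f x‖ := by
  rw [add_sub_cancel, hfp, sub_zero] at hratio
  have hlin : (1 / 2) * ‖fderiv ℝ f p (x - p)‖ ≤ ‖f x‖ := by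
    convert one_sub_mul_norm_le_norm_of_norm_sub_div_le hratio.le using 2
    norm_num
  refine ⟨hlin, ?_⟩
  calc cp / 2 * ‖x - p‖ = (1 / 2) * (cp * ‖x - p‖) := by ring
    _ ≤ (1 / 2) * ‖fderiv ℝ f p (x - p)‖ := by
      gcongr
      exact hcp ▸ smallestPosSV_mul_norm_le _ hx
    _ ≤ ‖f x‖ := hlin

/-- Let `f` be `C²`, `f(p) = 0`, let `g_p(h) = f(p+h) − f(p) − Df_p h`,
and let `c_p > 0` be the smallest nonzero singular value of `Df_p`.  If
`x − p ∈ (ker Df_p)^⊥` and `‖g_p(x−p)‖/‖Df_p(x−p)‖ < 1/2`, then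
`(1/2)‖Df_p(x−p)‖ ≤ ‖f(x)‖` and `(c_p/2)‖x−p‖ ≤ ‖f(x)‖`. -/
theorem statement6
    (n : ℕ)
    (f : EuclideanSpace ℝ (Fin n) → EuclideanSpace ℝ (Fin n))
    (hf : ContDiff ℝ 2 f)
    (p : EuclideanSpace ℝ (Fin n)) (hfp : f p = 0)
    (cp : ℝ) (hcp : cp = smallestPosSV (fderiv ℝ f p)) (hcppos : 0 < cp)
    (x : EuclideanSpace ℝ (Fin n))
    (hx : x - p ∈ (LinearMap.ker (fderiv ℝ f p).toLinearMap)ᗮ)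
    (hratio : ‖f (p + (x - p)) - f p - fderiv ℝ f p (x - p)‖ / ‖fderiv ℝ f p (x - p)‖ < 1 / 2) :
    (1 / 2) * ‖fderiv ℝ f p (x - p)‖ ≤ ‖f x‖ ∧ (cp / 2) * ‖x - p‖ ≤ ‖f x‖ :=
  statement6_general n f p hfp cp hcp x hx hratio
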